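/- Let f, g ∈ ℝ[x,y] be polynomials of degree at most 4 with homogeneous decompositions f = f₂ + f₃ + f₄ and g = g₂ + g₃ + g₄ (no terms of degree 0 or 1), where f_k, g_k are homogeneous of degree k. Assume that the coefficients of x² and of xy in f₂ and in g₂, and the coefficient of x³ in f₃ and in g₃, all vanish. Assume further that f(a) ≥ 0 for all a ∈ ℝ², that f₂ ≠ 0, and that the univariate polynomial D_f(y) := (f₃² − 4 f₂ f₄)(1, y) satisfies D_f''(0) ≠ 0. Then there exist ε > 0 and δ > 0 such that (f + ε g)(a) ≥ 0 for all a ∈ ℝ² with ‖a‖ < δ. -/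

import Mathlib

/-!
Weight `x` by 1 and `y` by 2. The hypotheses on the coefficients say that every monomial of `f`
and `g` has weight at least 4, and the weight-4 part of `f` is `c y² + b x² y + e x⁴`, i.e. the
quadratic form `c u² + b u v + e v²` evaluated at `(u, v) = (y, x²)`. On a small ball the monomials
of weight `≥ 5` are `o(y² + x⁴)` and those of weight 4 are `O(y² + x⁴)`. Restricting `f ≥ 0` to the
parabolas `y = s x²` gives `c s² + b s + e ≥ 0`; since `D_f''(0) = 2 (b² - 4 c e) ≠ 0` and `c ≠ 0`,
the form is positive definite, so it dominates both the higher-weight part of `f` and a small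
multiple of `g` near the origin.
-/

open MvPolynomial

noncomputable section

/-- Bivariate real polynomials (variables `x = X 0`, `y = X 1`). -/
abbrev MvP2 : Type := MvPolynomial (Fin 2) ℝ

/-- The discriminant `D_f(y) = (f₃² − 4 f₂ f₄)(1, y)` as a univariate polynomial in `y`. -/
def Ddisc (f₂ f₃ f₄ : MvP2) : Polynomial ℝ :=
  MvPolynomial.aeval ![(1 : Polynomial ℝ), Polynomial.X] (f₃ ^ 2 - 4 * f₂ * f₄)

def xyExp (i j : ℕ) : Fin 2 →₀ ℕ := Finsupp.single 0 i + Finsupp.single 1 j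

@[simp] lemma xyExp_apply_zero (i j : ℕ) : xyExp i j 0 = i := by simp [xyExp]

@[simp] lemma xyExp_apply_one (i j : ℕ) : xyExp i j 1 = j := by simp [xyExp]

@[simp] lemma degree_xyExp (i j : ℕ) : (xyExp i j).degree = i + j := by simp [xyExp]

lemma eq_xyExp (m : Fin 2 →₀ ℕ) : m = xyExp (m 0) (m 1) := by
  ext i
  fin_cases i <;> simp

lemma MvPolynomial.forall_mem_support_add {σ R : Type*} [CommSemiring R]
    {p q : MvPolynomial σ R} {P : (σ →₀ ℕ) → Prop} (hp : ∀ m ∈ p.support, P m)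
    (hq : ∀ m ∈ q.support, P m) : ∀ m ∈ (p + q).support, P m := fun m hm => by
  classical
  exact (Finset.mem_union.mp (support_add hm)).elim (hp m) (hq m)

section BinaryForms

variable {R : Type*} [CommRing R] {p : MvPolynomial (Fin 2) R} {n k : ℕ}

lemma coeff_xyExp_eq_zero_of_lt_two (h₂₀ : coeff (Finsupp.single 0 2) p = 0)
    (h₁₁ : coeff (Finsupp.single 0 1 + Finsupp.single 1 1) p = 0) :
    ∀ j < 2, coeff (xyExp (2 - j) j) p = 0 := by
  intro j hj
  interval_cases j
  · simpa [xyExp] using h₂₀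
  · simpa [xyExp] using h₁₁

lemma coeff_xyExp_eq_zero_of_lt_one (h₃₀ : coeff (Finsupp.single 0 3) p = 0) :
    ∀ j < 1, coeff (xyExp (3 - j) j) p = 0 := by
  intro j hj
  interval_cases j
  simpa [xyExp] using h₃₀

lemma aeval_monomial_xyExp (i j : ℕ) (c : R) :
    aeval ![1, Polynomial.X] (monomial (xyExp i j) c) = Polynomial.C c * Polynomial.X ^ j := by
  simp [aeval_monomial, Finsupp.prod_fintype, Fin.prod_univ_two]

lemma eval_monomial_xyExp (a : Fin 2 → R) (i j : ℕ) (c : R) :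
    eval a (monomial (xyExp i j) c) = c * a 0 ^ i * a 1 ^ j := by
  simp [eval_monomial, Finsupp.prod_fintype, Fin.prod_univ_two, mul_assoc]

lemma X_pow_dvd_aeval (h : ∀ m ∈ p.support, k ≤ m 1) :
    (Polynomial.X : Polynomial R) ^ k ∣ aeval ![1, Polynomial.X] p := by
  rw [p.as_sum, map_sum]
  refine Finset.dvd_sum fun m hm => ?_
  rw [eq_xyExp m, aeval_monomial_xyExp]
  exact (pow_dvd_pow _ (h m hm)).mul_left _

lemma X_pow_dvd_aeval_monomial_add_sub {r : MvPolynomial (Fin 2) R} (i : ℕ) (c : R)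
    (h : ∀ m ∈ r.support, k + 1 ≤ m 1) :
    Polynomial.X ^ (k + 1) ∣ aeval ![1, Polynomial.X] (monomial (xyExp i k) c + r) -
      Polynomial.C c * Polynomial.X ^ k := by
  rw [map_add, aeval_monomial_xyExp, add_sub_cancel_left]
  exact X_pow_dvd_aeval h

namespace MvPolynomial.IsHomogeneous

lemma apply_zero_add_apply_one (hp : p.IsHomogeneous n) {m : Fin 2 →₀ ℕ}
    (hm : m ∈ p.support) : m 0 + m 1 = n := by
  by_contra h
  exact mem_support_iff.mp hm (hp.coeff_eq_zero (by simpa [Finsupp.degree_eq_sum] using h))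

lemma le_apply_one (hp : p.IsHomogeneous n) (h : ∀ j < k, coeff (xyExp (n - j) j) p = 0) :
    ∀ m ∈ p.support, k ≤ m 1 := by
  intro m hm
  by_contra! hlt
  have hm0 : m 0 = n - m 1 := by have := hp.apply_zero_add_apply_one hm; omega
  apply mem_support_iff.mp hm
  rw [eq_xyExp m, hm0]
  exact h _ hlt

lemma add_le_weight (hp : p.IsHomogeneous n) (h : ∀ m ∈ p.support, k ≤ m 1) :
    ∀ m ∈ p.support, n + k ≤ m 0 + 2 * m 1 := fun m hm => by
  have := hp.apply_zero_add_apply_one hm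
  have := h m hm
  omega

lemma eq_zero_of_lt_apply_one (hp : p.IsHomogeneous n) (h : ∀ m ∈ p.support, n < m 1) :
    p = 0 := by
  rw [← support_eq_empty, Finset.eq_empty_iff_forall_notMem]
  intro m hm
  have := hp.apply_zero_add_apply_one hm
  have := h m hm
  omega

lemma exists_eq_monomial_add {i : ℕ} (hp : p.IsHomogeneous (i + k))
    (h : ∀ j < k, coeff (xyExp (i + k - j) j) p = 0) :
    ∃ (c : R) (r : MvPolynomial (Fin 2) R), p = monomial (xyExp i k) c + r ∧
      r.IsHomogeneous (i + k) ∧ ∀ m ∈ r.support, k + 1 ≤ m 1 := by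
  set c := coeff (xyExp i k) p
  have hr : (p - monomial (xyExp i k) c).IsHomogeneous (i + k) :=
    hp.sub (isHomogeneous_monomial _ (degree_xyExp i k))
  refine ⟨c, _, (add_sub_cancel _ _).symm, hr, hr.le_apply_one fun j hj => ?_⟩
  rw [coeff_sub, coeff_monomial]
  rcases Nat.lt_succ_iff_lt_or_eq.mp hj with hj | rfl
  · rw [h j hj, if_neg, sub_zero]
    intro heq
    have := congrArg (· 1) heq
    simp only [xyExp_apply_one] at this
    omega
  · simp [c]

end MvPolynomial.IsHomogeneous

lemma eval_zero_derivative_derivative_discr {P₂ P₃ P₄ : Polynomial R} {c b e : R}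
    (h₂ : Polynomial.X ^ 3 ∣ P₂ - Polynomial.C c * Polynomial.X ^ 2)
    (h₃ : Polynomial.X ^ 2 ∣ P₃ - Polynomial.C b * Polynomial.X)
    (h₄ : Polynomial.X ∣ P₄ - Polynomial.C e) :
    (P₃ ^ 2 - 4 * P₂ * P₄).derivative.derivative.eval 0 = 2 * (b ^ 2 - 4 * c * e) := by
  obtain ⟨A₂, hA₂⟩ := h₂
  obtain ⟨A₃, hA₃⟩ := h₃
  obtain ⟨A₄, hA₄⟩ := h₄
  rw [sub_eq_iff_eq_add'] at hA₂ hA₃ hA₄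
  subst hA₂ hA₃ hA₄
  simp [Polynomial.derivative_mul, Polynomial.derivative_pow]
  ring

end BinaryForms

lemma four_le_weight_of_mem_support {g₂ g₃ g₄ : MvP2}
    (hg2 : g₂.IsHomogeneous 2) (hg3 : g₃.IsHomogeneous 3) (hg4 : g₄.IsHomogeneous 4)
    (hgx2 : coeff (Finsupp.single 0 2) g₂ = 0)
    (hgxy : coeff (Finsupp.single 0 1 + Finsupp.single 1 1) g₂ = 0)
    (hgx3 : coeff (Finsupp.single 0 3) g₃ = 0) :
    ∀ m ∈ (g₂ + g₃ + g₄).support, 4 ≤ m 0 + 2 * m 1 :=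
  forall_mem_support_add (forall_mem_support_add
    (hg2.add_le_weight (hg2.le_apply_one (coeff_xyExp_eq_zero_of_lt_two hgx2 hgxy)))
    (hg3.add_le_weight (hg3.le_apply_one (coeff_xyExp_eq_zero_of_lt_one hgx3))))
    (hg4.add_le_weight (k := 0) fun _ _ => Nat.zero_le _)

lemma eval_zero_derivative_derivative_Ddisc {c b e : ℝ} {r₂ r₃ r₄ : MvP2}
    (h₂ : ∀ m ∈ r₂.support, 3 ≤ m 1) (h₃ : ∀ m ∈ r₃.support, 2 ≤ m 1)
    (h₄ : ∀ m ∈ r₄.support, 1 ≤ m 1) :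
    (Ddisc (monomial (xyExp 0 2) c + r₂) (monomial (xyExp 2 1) b + r₃)
      (monomial (xyExp 4 0) e + r₄)).derivative.derivative.eval 0 = 2 * (b ^ 2 - 4 * c * e) := by
  have h₃' := X_pow_dvd_aeval_monomial_add_sub 2 b h₃
  have h₄' := X_pow_dvd_aeval_monomial_add_sub 4 e h₄
  rw [pow_one] at h₃'
  rw [pow_zero, mul_one, zero_add, pow_one] at h₄'
  rw [Ddisc, map_sub, map_mul, map_mul, map_pow, map_ofNat,
    eval_zero_derivative_derivative_discr (X_pow_dvd_aeval_monomial_add_sub 0 c h₂) h₃' h₄']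

lemma abs_pow_mul_abs_pow_le_of_four_le {x y : ℝ} {i j : ℕ} (hx : |x| ≤ 1) (hy : |y| ≤ 1)
    (h : 4 ≤ i + 2 * j) : |x| ^ i * |y| ^ j ≤ x ^ 4 + y ^ 2 := by
  have hx0 := abs_nonneg x
  have hy0 := abs_nonneg y
  rcases (by omega : 2 ≤ j ∨ (j = 1 ∧ 2 ≤ i) ∨ (j = 0 ∧ 4 ≤ i)) with hj | ⟨rfl, hi⟩ | ⟨rfl, hi⟩
  · calc |x| ^ i * |y| ^ j ≤ 1 * |y| ^ 2 :=
          mul_le_mul (pow_le_one₀ hx0 hx) (pow_le_pow_of_le_one hy0 hy hj) (by positivity)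
            zero_le_one
      _ ≤ x ^ 4 + y ^ 2 := by rw [one_mul, sq_abs]; exact le_add_of_nonneg_left (by positivity)
  · calc |x| ^ i * |y| ^ 1 ≤ |x| ^ 2 * |y| := by
          rw [pow_one]; exact mul_le_mul_of_nonneg_right (pow_le_pow_of_le_one hx0 hx hi) hy0
      _ ≤ x ^ 4 + y ^ 2 := by
          rw [sq_abs]; nlinarith [sq_nonneg (x ^ 2 - |y|), sq_abs y]
  · calc |x| ^ i * |y| ^ 0 ≤ |x| ^ 4 := by
          rw [pow_zero, mul_one]; exact pow_le_pow_of_le_one hx0 hx hi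
      _ ≤ x ^ 4 + y ^ 2 := by
          rw [pow_abs, abs_of_nonneg (by positivity)]; exact le_add_of_nonneg_right (by positivity)

lemma abs_pow_mul_abs_pow_le_of_five_le {x y r : ℝ} {i j : ℕ} (hx : |x| ≤ r) (hy : |y| ≤ r)
    (hr : r ≤ 1) (h : 5 ≤ i + 2 * j) : |x| ^ i * |y| ^ j ≤ r * (x ^ 4 + y ^ 2) := by
  have hx1 := hx.trans hr
  have hy1 := hy.trans hr
  rcases Nat.eq_zero_or_pos i with rfl | hi
  · obtain ⟨j, rfl⟩ : ∃ j', j = j' + 1 := ⟨j - 1, by omega⟩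
    calc |x| ^ 0 * |y| ^ (j + 1) = |y| * (|x| ^ 0 * |y| ^ j) := by ring
      _ ≤ r * (x ^ 4 + y ^ 2) :=
          mul_le_mul hy (abs_pow_mul_abs_pow_le_of_four_le hx1 hy1 (by omega)) (by positivity)
            ((abs_nonneg y).trans hy)
  · obtain ⟨i, rfl⟩ : ∃ i', i = i' + 1 := ⟨i - 1, by omega⟩
    calc |x| ^ (i + 1) * |y| ^ j = |x| * (|x| ^ i * |y| ^ j) := by ring
      _ ≤ r * (x ^ 4 + y ^ 2) :=
          mul_le_mul hx (abs_pow_mul_abs_pow_le_of_four_le hx1 hy1 (by omega)) (by positivity)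
            ((abs_nonneg x).trans hx)

lemma MvPolynomial.abs_eval_le_of_forall_mem_support {σ : Type*} [Fintype σ] (a : σ → ℝ)
    (p : MvPolynomial σ ℝ) {B : ℝ} (h : ∀ m ∈ p.support, |∏ i, a i ^ m i| ≤ B) :
    |eval a p| ≤ (∑ m ∈ p.support, |coeff m p|) * B := by
  rw [eval_eq', Finset.sum_mul]
  refine (Finset.abs_sum_le_sum_abs _ _).trans (Finset.sum_le_sum fun m hm => ?_)
  rw [abs_mul]
  exact mul_le_mul_of_nonneg_left (h m hm) (abs_nonneg _)

lemma abs_prod_fin_two (a : Fin 2 → ℝ) (m : Fin 2 →₀ ℕ) :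
    |∏ i, a i ^ m i| = |a 0| ^ m 0 * |a 1| ^ m 1 := by
  simp [Fin.prod_univ_two, abs_mul, abs_pow]

lemma abs_eval_le_of_four_le {p : MvP2} (hp : ∀ m ∈ p.support, 4 ≤ m 0 + 2 * m 1)
    {a : Fin 2 → ℝ} (ha : ‖a‖ ≤ 1) :
    |eval a p| ≤ (∑ m ∈ p.support, |coeff m p|) * (a 0 ^ 4 + a 1 ^ 2) :=
  abs_eval_le_of_forall_mem_support a p fun m hm => by
    rw [abs_prod_fin_two]
    exact abs_pow_mul_abs_pow_le_of_four_le ((norm_le_pi_norm a 0).trans ha)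
      ((norm_le_pi_norm a 1).trans ha) (hp m hm)

lemma abs_eval_le_of_five_le {p : MvP2} (hp : ∀ m ∈ p.support, 5 ≤ m 0 + 2 * m 1)
    {a : Fin 2 → ℝ} (ha : ‖a‖ ≤ 1) :
    |eval a p| ≤ (∑ m ∈ p.support, |coeff m p|) * (‖a‖ * (a 0 ^ 4 + a 1 ^ 2)) :=
  abs_eval_le_of_forall_mem_support a p fun m hm => by
    rw [abs_prod_fin_two]
    exact abs_pow_mul_abs_pow_le_of_five_le (norm_le_pi_norm a 0) (norm_le_pi_norm a 1) ha
      (hp m hm)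

lemma exists_pos_mul_le_quadratic {c b e : ℝ} (hc : 0 < c) (hbe : b ^ 2 < 4 * c * e) :
    ∃ μ > 0, ∀ u v : ℝ, μ * (u ^ 2 + v ^ 2) ≤ c * u ^ 2 + b * u * v + e * v ^ 2 := by
  have he : 0 < e := by nlinarith [sq_nonneg b]
  refine ⟨(4 * c * e - b ^ 2) / (4 * (c + e)), by positivity, fun u v => ?_⟩
  set μ := (4 * c * e - b ^ 2) / (4 * (c + e))
  have hμ : μ * (4 * (c + e)) = 4 * c * e - b ^ 2 := div_mul_cancel₀ _ (by positivity)
  have hcμ : 0 < c - μ := by nlinarith [sq_nonneg b]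
  have hdet : 0 ≤ 4 * (c - μ) * (e - μ) - b ^ 2 := by nlinarith [sq_nonneg μ]
  nlinarith [sq_nonneg (2 * (c - μ) * u + b * v), mul_nonneg hdet (sq_nonneg v)]

open Filter Topology in
lemma quadratic_nonneg_of_forall_nonneg_add {c b e C : ℝ} {R : (Fin 2 → ℝ) → ℝ}
    (hR : ∀ a, ‖a‖ ≤ 1 → |R a| ≤ C * (‖a‖ * (a 0 ^ 4 + a 1 ^ 2)))
    (hf : ∀ a, 0 ≤ c * a 1 ^ 2 + b * a 0 ^ 2 * a 1 + e * a 0 ^ 4 + R a) (s : ℝ) :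
    0 ≤ c * s ^ 2 + b * s + e := by
  set γ : ℝ → Fin 2 → ℝ := fun t => ![t, s * t ^ 2]
  have hγ : Tendsto γ (𝓝[≠] 0) (𝓝 0) := by
    have hcont : Continuous γ := continuous_pi fun i => by fin_cases i <;> simp [γ] <;> fun_prop
    have hγ0 : γ 0 = 0 := by ext i; fin_cases i <;> simp [γ]
    exact hγ0 ▸ (hcont.tendsto 0).mono_left nhdsWithin_le_nhds
  have hlim : Tendsto (fun t => c * s ^ 2 + b * s + e + C * ‖γ t‖ * (1 + s ^ 2)) (𝓝[≠] 0)
      (𝓝 (c * s ^ 2 + b * s + e)) := by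
    simpa using ((hγ.norm.const_mul C).mul_const (1 + s ^ 2)).const_add (c * s ^ 2 + b * s + e)
  refine ge_of_tendsto hlim ?_
  filter_upwards [self_mem_nhdsWithin,
    hγ.norm.eventually (ge_mem_nhds (by simp : ‖(0 : Fin 2 → ℝ)‖ < 1))] with t (ht : t ≠ 0) hγt
  -- along `γ`, `f (γ t) = t⁴ (c s² + b s + e) + R (γ t)` and `x⁴ + y² = t⁴ (1 + s²)`
  have hR' := (abs_le.mp (hR (γ t) hγt)).2
  have hf' := hf (γ t)
  rw [show γ t 0 = t from rfl, show γ t 1 = s * t ^ 2 from rfl] at hR' hf'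
  refine nonneg_of_mul_nonneg_right ?_ (by positivity : 0 < t ^ 4)
  nlinarith

lemma pos_and_sq_lt_of_forall_nonneg {c b e : ℝ} (h : ∀ s, 0 ≤ c * s ^ 2 + b * s + e)
    (hc : c ≠ 0) (hdisc : b ^ 2 - 4 * c * e ≠ 0) : 0 < c ∧ b ^ 2 < 4 * c * e := by
  have hle : discrim c b e ≤ 0 := discrim_le_zero fun s => by simpa [sq] using h s
  rw [discrim] at hle
  have hc' : 0 < c := by
    refine lt_of_le_of_ne (not_lt.mp fun hneg => ?_) hc.symm
    nlinarith [h 1, h (-1), sq_nonneg b]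
  exact ⟨hc', by rw [← sub_neg]; exact lt_of_le_of_ne hle hdisc⟩

lemma exists_nonneg_add_mul {c b e C K : ℝ} {R G : (Fin 2 → ℝ) → ℝ}
    (hc : 0 < c) (hbe : b ^ 2 < 4 * c * e) (hC : 0 ≤ C) (hK : 0 ≤ K)
    (hR : ∀ a, ‖a‖ ≤ 1 → |R a| ≤ C * (‖a‖ * (a 0 ^ 4 + a 1 ^ 2)))
    (hG : ∀ a, ‖a‖ ≤ 1 → |G a| ≤ K * (a 0 ^ 4 + a 1 ^ 2)) :
    ∃ ε > 0, ∃ δ > 0, ∀ a, ‖a‖ < δ →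
      0 ≤ c * a 1 ^ 2 + b * a 0 ^ 2 * a 1 + e * a 0 ^ 4 + R a + ε * G a := by
  obtain ⟨μ, hμ, hq⟩ := exists_pos_mul_le_quadratic hc hbe
  set ε := μ / (2 * (K + 1))
  have hε : ε * (2 * (K + 1)) = μ := div_mul_cancel₀ _ (by positivity)
  refine ⟨ε, by positivity, min 1 (μ / (2 * (C + 1))), by positivity, fun a ha => ?_⟩
  have ha1 : ‖a‖ ≤ 1 := (ha.trans_le (min_le_left _ _)).le
  have haμ : ‖a‖ * (2 * (C + 1)) ≤ μ :=
    (le_div_iff₀ (by positivity)).mp (ha.trans_le (min_le_right _ _)).le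
  have hquad : μ * (a 0 ^ 4 + a 1 ^ 2) ≤ c * a 1 ^ 2 + b * a 0 ^ 2 * a 1 + e * a 0 ^ 4 := by
    convert hq (a 1) (a 0 ^ 2) using 1 <;> ring
  have hCa : C * ‖a‖ ≤ μ / 2 := by nlinarith [norm_nonneg a]
  have hεK : ε * K ≤ μ / 2 := by nlinarith [show 0 ≤ ε by positivity]
  have hR' := neg_le_of_abs_le (hR a ha1)
  have hG' := mul_le_mul_of_nonneg_left (neg_le_of_abs_le (hG a ha1)) (by positivity : 0 ≤ ε)
  have hN : 0 ≤ a 0 ^ 4 + a 1 ^ 2 := by positivity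
  nlinarith [mul_le_mul_of_nonneg_right hCa hN, mul_le_mul_of_nonneg_right hεK hN]

theorem stmt_5 (f₂ f₃ f₄ g₂ g₃ g₄ : MvP2)
    (hf2 : f₂.IsHomogeneous 2) (hf3 : f₃.IsHomogeneous 3) (hf4 : f₄.IsHomogeneous 4)
    (hg2 : g₂.IsHomogeneous 2) (hg3 : g₃.IsHomogeneous 3) (hg4 : g₄.IsHomogeneous 4)
    (hfx2 : coeff (Finsupp.single (0 : Fin 2) 2) f₂ = 0)
    (hfxy : coeff (Finsupp.single (0 : Fin 2) 1 + Finsupp.single (1 : Fin 2) 1) f₂ = 0)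
    (hfx3 : coeff (Finsupp.single (0 : Fin 2) 3) f₃ = 0)
    (hgx2 : coeff (Finsupp.single (0 : Fin 2) 2) g₂ = 0)
    (hgxy : coeff (Finsupp.single (0 : Fin 2) 1 + Finsupp.single (1 : Fin 2) 1) g₂ = 0)
    (hgx3 : coeff (Finsupp.single (0 : Fin 2) 3) g₃ = 0)
    (hfpos : ∀ a : Fin 2 → ℝ, 0 ≤ eval a (f₂ + f₃ + f₄))
    (hf2ne : f₂ ≠ 0)
    (hD : Polynomial.eval 0
      (Polynomial.derivative (Polynomial.derivative (Ddisc f₂ f₃ f₄))) ≠ 0) :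
    ∃ ε : ℝ, 0 < ε ∧ ∃ δ : ℝ, 0 < δ ∧ ∀ a : Fin 2 → ℝ, ‖a‖ < δ →
      0 ≤ eval a ((f₂ + f₃ + f₄) + ε • (g₂ + g₃ + g₄)) := by
  have hG := four_le_weight_of_mem_support hg2 hg3 hg4 hgx2 hgxy hgx3
  obtain ⟨c, r₂, rfl, hr₂, hr₂y⟩ := hf2.exists_eq_monomial_add (i := 0) (k := 2)
    (coeff_xyExp_eq_zero_of_lt_two hfx2 hfxy)
  obtain ⟨b, r₃, rfl, hr₃, hr₃y⟩ := hf3.exists_eq_monomial_add (i := 2) (k := 1)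
    (coeff_xyExp_eq_zero_of_lt_one hfx3)
  obtain ⟨e, r₄, rfl, hr₄, hr₄y⟩ := hf4.exists_eq_monomial_add (i := 4) (k := 0) (by simp)
  have hR : ∀ m ∈ (r₂ + r₃ + r₄).support, 5 ≤ m 0 + 2 * m 1 :=
    forall_mem_support_add (forall_mem_support_add (hr₂.add_le_weight hr₂y)
      (hr₃.add_le_weight hr₃y)) (hr₄.add_le_weight hr₄y)
  have hevalF (a : Fin 2 → ℝ) : eval a (monomial (xyExp 0 2) c + r₂ +
      (monomial (xyExp 2 1) b + r₃) + (monomial (xyExp 4 0) e + r₄)) =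
      c * a 1 ^ 2 + b * a 0 ^ 2 * a 1 + e * a 0 ^ 4 + eval a (r₂ + r₃ + r₄) := by
    simp only [map_add, eval_monomial_xyExp]
    ring
  have hquad := quadratic_nonneg_of_forall_nonneg_add
    (fun a ha => abs_eval_le_of_five_le hR ha) fun a => hevalF a ▸ hfpos a
  have hc : c ≠ 0 := by
    rintro rfl
    exact hf2ne (by simpa using hr₂.eq_zero_of_lt_apply_one hr₂y)
  have hdisc : b ^ 2 - 4 * c * e ≠ 0 := by
    rw [eval_zero_derivative_derivative_Ddisc hr₂y hr₃y hr₄y] at hD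
    exact right_ne_zero_of_mul hD
  obtain ⟨hc, hbe⟩ := pos_and_sq_lt_of_forall_nonneg hquad hc hdisc
  obtain ⟨ε, hε, δ, hδ, h⟩ := exists_nonneg_add_mul hc hbe
    (Finset.sum_nonneg fun _ _ => abs_nonneg _) (Finset.sum_nonneg fun _ _ => abs_nonneg _)
    (fun a ha => abs_eval_le_of_five_le hR ha) (fun a ha => abs_eval_le_of_four_le hG ha)
  refine ⟨ε, hε, δ, hδ, fun a ha => ?_⟩
  rw [map_add, smul_eval, hevalF]
  exact h a ha
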